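/- arXiv:2210.08238 — 3 statements merged into one kernel-verified Lean document; each statement's English description precedes it below -/
import Mathlib

section
/- Let P = ⊗_{(h,s,a)} P_{h,s,a} be a set of transition models for a finite-horizon MDP with horizon H, where each P_{h,s,a} ⊆ Δ^S is convex. Let (π^1, P^1) and (π^2, P^2) be policy–transition pairs with P^1, P^2 ∈ P, and let λ ∈ [0,1]. Then there exists a policy π and a transition model P ∈ P such that for every (h, s, a), W^π(1_{h,s,a}, P) = λ * W^{π^1}(1_{h,s,a}, P^1) + (1−λ) * W^{π^2}(1_{h,s,a}, P^2), i.e., the occupancy measure of (π, P) is the λ-mixture of the two occupancy measures. -/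
open Finset

noncomputable def trajProb (H : ℕ) {S A : Type} [Fintype S] [Fintype A] [DecidableEq S]
    (π : ℕ → S → A → ℝ) (p : ℕ → S → A → S → ℝ) (s0 : S)
    (s : Fin (H + 1) → S) (a : Fin H → A) : ℝ :=
  (if s 0 = s0 then (1 : ℝ) else 0) *
    ∏ h : Fin H, (π h (s h.castSucc) (a h) * p h (s h.castSucc) (a h) (s h.succ))

noncomputable def W (H : ℕ) {S A : Type} [Fintype S] [Fintype A] [DecidableEq S]
    (π : ℕ → S → A → ℝ) (p : ℕ → S → A → S → ℝ) (s0 : S)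
    (u : ℕ → S → A → ℝ) : ℝ :=
  ∑ s : Fin (H + 1) → S, ∑ a : Fin H → A,
    trajProb H π p s0 s a * ∑ h : Fin H, u h (s h.castSucc) (a h)

/-- Occupancy measure `W^π(1_{h,s,a}, p)`. -/
noncomputable def occ (H : ℕ) {S A : Type} [Fintype S] [Fintype A] [DecidableEq S]
    [DecidableEq A] (π : ℕ → S → A → ℝ) (p : ℕ → S → A → S → ℝ) (s0 : S)
    (h0 : ℕ) (s1 : S) (a1 : A) : ℝ :=
  W H π p s0 (fun h s a => if h = h0 ∧ s = s1 ∧ a = a1 then 1 else 0)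

/-! Under a policy `π` and a stochastic kernel `P`, the occupancy of `(h, s, a)` is
`d_h(s) π_h(a | s)`, where the state distribution obeys the forward recursion
`d_{h+1}(s') = ∑_{s,a} d_h(s) π_h(a | s) P_h(s' | s, a)`.
Take `π_h(· | s)` to be the convex combination of `π¹_h(· | s)` and `π²_h(· | s)` with weights
`λ d¹_h(s)` and `(1 - λ) d²_h(s)`, and `P_{h,s,a}` the convex combination of `P¹_{h,s,a}` and
`P²_{h,s,a}` weighted by the two occupancies of `(h, s, a)` (any point of the convex set will do when
the weights vanish). These weights make each term of the recursion the corresponding mixture, so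
`d_h = λ d¹_h + (1 - λ) d²_h` by induction on `h`, and the occupancies mix in the same way. -/

theorem Fin.sum_univ_pi_snoc {α M : Type*} [Fintype α] [AddCommMonoid M] (n : ℕ)
    (f : (Fin (n + 1) → α) → M) :
    ∑ g : Fin (n + 1) → α, f g = ∑ g : Fin n → α, ∑ x : α, f (Fin.snoc g x) := by
  rw [← (Fin.snocEquiv fun _ => α).sum_comp, Fintype.sum_prod_type, Finset.sum_comm]
  rfl

section Trajectory

variable {S A : Type} [Fintype S] [Fintype A] [DecidableEq S]
  (π : ℕ → S → A → ℝ) (p : ℕ → S → A → S → ℝ) (s0 : S)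

theorem trajProb_snoc (H : ℕ) (s : Fin (H + 1) → S) (x : S) (a : Fin H → A) (y : A) :
    trajProb (H + 1) π p s0 (Fin.snoc s x) (Fin.snoc a y) =
      trajProb H π p s0 s a * (π H (s (Fin.last H)) y * p H (s (Fin.last H)) y x) := by
  simp only [trajProb, Fin.prod_univ_castSucc, Fin.snoc_castSucc, Fin.snoc_last,
    Fin.succ_castSucc, Fin.succ_last, Fin.val_castSucc, Fin.val_last]
  rw [show (0 : Fin (H + 2)) = (0 : Fin (H + 1)).castSucc from rfl, Fin.snoc_castSucc]
  ring

theorem sum_trajProb_succ (H : ℕ) (F : (Fin (H + 2) → S) → (Fin (H + 1) → A) → ℝ) :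
    ∑ s, ∑ a, trajProb (H + 1) π p s0 s a * F s a =
      ∑ s : Fin (H + 1) → S, ∑ a : Fin H → A, trajProb H π p s0 s a *
        ∑ y, ∑ x, π H (s (Fin.last H)) y * p H (s (Fin.last H)) y x *
          F (Fin.snoc s x) (Fin.snoc a y) := by
  rw [Fin.sum_univ_pi_snoc]
  refine Finset.sum_congr rfl fun s _ => ?_
  simp only [Fin.sum_univ_pi_snoc (f := fun a => trajProb (H + 1) π p s0 _ a * _), trajProb_snoc,
    Finset.mul_sum]
  rw [Finset.sum_comm]
  refine Finset.sum_congr rfl fun a _ => ?_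
  rw [Finset.sum_comm]
  simp only [mul_assoc]

noncomputable def stateDist : ℕ → S → ℝ
  | 0 => fun s => if s = s0 then 1 else 0
  | h + 1 => fun s' => ∑ s, ∑ a, stateDist h s * π h s a * p h s a s'

theorem stateDist_nonneg (hπ : ∀ h s a, 0 ≤ π h s a) (hp : ∀ h s a s', 0 ≤ p h s a s') :
    ∀ h s, 0 ≤ stateDist π p s0 h s
  | 0, s => by unfold stateDist; positivity
  | h + 1, s' => Finset.sum_nonneg fun s _ => Finset.sum_nonneg fun a _ =>
      mul_nonneg (mul_nonneg (stateDist_nonneg hπ hp h s) (hπ h s a)) (hp h s a s')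

theorem sum_trajProb_mul_last (H : ℕ) (f : S → ℝ) :
    ∑ s : Fin (H + 1) → S, ∑ a : Fin H → A, trajProb H π p s0 s a * f (s (Fin.last H)) =
      ∑ x, stateDist π p s0 H x * f x := by
  induction H generalizing f with
  | zero =>
    rw [← (Equiv.funUnique (Fin 1) S).symm.sum_comp]
    simp [trajProb, stateDist]
  | succ H ih =>
    simp only [sum_trajProb_succ, Fin.snoc_last]
    rw [ih fun z => ∑ y, ∑ x, π H z y * p H z y x * f x]
    simp only [stateDist, Finset.sum_mul, Finset.mul_sum]
    conv_rhs => rw [Finset.sum_comm]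
    refine Finset.sum_congr rfl fun z _ => ?_
    rw [Finset.sum_comm]
    simp only [mul_assoc]

theorem W_eq_sum_stateDist (hπ : ∀ h s, ∑ a, π h s a = 1) (hp : ∀ h s a, ∑ s', p h s a s' = 1)
    (H : ℕ) (u : ℕ → S → A → ℝ) :
    W H π p s0 u = ∑ h ∈ range H, ∑ s, ∑ a, stateDist π p s0 h s * π h s a * u h s a := by
  induction H with
  | zero => simp [W]
  | succ H ih =>
    have last_step : ∀ (s : Fin (H + 1) → S) (a : Fin H → A),
        ∑ y, ∑ x, π H (s (Fin.last H)) y * p H (s (Fin.last H)) y x *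
          ∑ h : Fin (H + 1), u h ((Fin.snoc s x : Fin (H + 2) → S) h.castSucc)
            ((Fin.snoc a y : Fin (H + 1) → A) h) =
        ∑ h : Fin H, u h (s h.castSucc) (a h) +
          ∑ y, π H (s (Fin.last H)) y * u H (s (Fin.last H)) y := by
      intro s a
      simp only [Fin.sum_univ_castSucc (n := H), Fin.snoc_castSucc, Fin.snoc_last,
        Fin.val_castSucc, Fin.val_last]
      simp only [← Finset.sum_mul, ← Finset.mul_sum, hp, mul_one]
      rw [Finset.sum_congr rfl fun y _ => mul_add _ _ _, Finset.sum_add_distrib, ← Finset.sum_mul,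
        hπ, one_mul]
    rw [W, sum_trajProb_succ]
    simp only [last_step, mul_add, Finset.sum_add_distrib]
    rw [← W, ih, sum_range_succ, sum_trajProb_mul_last (f := fun z => ∑ y, π H z y * u H z y)]
    simp only [Finset.mul_sum, mul_assoc]

theorem occ_eq [DecidableEq A] (hπ : ∀ h s, ∑ a, π h s a = 1)
    (hp : ∀ h s a, ∑ s', p h s a s' = 1) (H h₀ : ℕ) (s₁ : S) (a₁ : A) :
    occ H π p s0 h₀ s₁ a₁ = if h₀ < H then stateDist π p s0 h₀ s₁ * π h₀ s₁ a₁ else 0 := by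
  rw [occ, W_eq_sum_stateDist π p s0 hπ hp]
  simp [mul_ite, ite_and, Finset.sum_ite_eq']

end Trajectory

section Mixture

variable {S A : Type} [Fintype S] [Fintype A] [DecidableEq S]
  {π π₁ π₂ : ℕ → S → A → ℝ} {p p₁ p₂ : ℕ → S → A → S → ℝ} {s0 : S} {c₁ c₂ : ℝ}

theorem stateDist_eq_of_smul_eq (hc : c₁ + c₂ = 1)
    (hπ : ∀ h s, (c₁ * stateDist π₁ p₁ s0 h s + c₂ * stateDist π₂ p₂ s0 h s) • π h s =
      (c₁ * stateDist π₁ p₁ s0 h s) • π₁ h s + (c₂ * stateDist π₂ p₂ s0 h s) • π₂ h s)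
    (hp : ∀ h s a, (c₁ * stateDist π₁ p₁ s0 h s * π₁ h s a +
        c₂ * stateDist π₂ p₂ s0 h s * π₂ h s a) • p h s a =
      (c₁ * stateDist π₁ p₁ s0 h s * π₁ h s a) • p₁ h s a +
        (c₂ * stateDist π₂ p₂ s0 h s * π₂ h s a) • p₂ h s a) :
    ∀ h s, stateDist π p s0 h s = c₁ * stateDist π₁ p₁ s0 h s + c₂ * stateDist π₂ p₂ s0 h s
  | 0, s => by
    simp only [stateDist]
    split_ifs <;> simp [hc]
  | h + 1, s' => by
    have step : ∀ s a, stateDist π p s0 h s * π h s a * p h s a s' =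
        c₁ * (stateDist π₁ p₁ s0 h s * π₁ h s a * p₁ h s a s') +
          c₂ * (stateDist π₂ p₂ s0 h s * π₂ h s a * p₂ h s a s') := by
      intro s a
      have hπa := congrFun (hπ h s) a
      have hpa := congrFun (hp h s a) s'
      simp only [Pi.add_apply, Pi.smul_apply, smul_eq_mul] at hπa hpa
      rw [stateDist_eq_of_smul_eq hc hπ hp h s, hπa, hpa]
      ring
    simp only [stateDist, step, Finset.sum_add_distrib, Finset.mul_sum]

end Mixture

/-- **Occupancy-mixture lemma (binary case).** If each `Pconf_{h,s,a} ⊆ Δ^S` is convex,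
`(π¹, P¹)` and `(π², P²)` are policy–transition pairs with `P¹, P² ∈ Pconf`, and
`λ ∈ [0,1]`, then there are a policy `π` and `P ∈ Pconf` whose occupancy measure is the
`λ`-mixture of the two occupancy measures. -/
theorem stmt6 {S A : Type} [Fintype S] [Fintype A] [DecidableEq S] [DecidableEq A]
    (H : ℕ) (Pconf : ℕ → S → A → Set (S → ℝ))
    (hconv : ∀ h s a, Convex ℝ (Pconf h s a))
    (hsimplex : ∀ h s a, ∀ q ∈ Pconf h s a, (∀ s', 0 ≤ q s') ∧ ∑ s', q s' = 1)
    (π₁ π₂ : ℕ → S → A → ℝ) (P₁ P₂ : ℕ → S → A → S → ℝ) (s0 : S)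
    (hπ₁ : ∀ h s, (∀ a, 0 ≤ π₁ h s a) ∧ ∑ a, π₁ h s a = 1)
    (hπ₂ : ∀ h s, (∀ a, 0 ≤ π₂ h s a) ∧ ∑ a, π₂ h s a = 1)
    (hP₁ : ∀ h s a, P₁ h s a ∈ Pconf h s a)
    (hP₂ : ∀ h s a, P₂ h s a ∈ Pconf h s a)
    (lam : ℝ) (hlam : lam ∈ Set.Icc (0 : ℝ) 1) :
    ∃ (π : ℕ → S → A → ℝ) (P : ℕ → S → A → S → ℝ),
      (∀ h s, (∀ a, 0 ≤ π h s a) ∧ ∑ a, π h s a = 1) ∧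
      (∀ h s a, P h s a ∈ Pconf h s a) ∧
      ∀ h s a, occ H π P s0 h s a
          = lam * occ H π₁ P₁ s0 h s a + (1 - lam) * occ H π₂ P₂ s0 h s a := by
  obtain ⟨hlam₀, hlam₁⟩ := hlam
  have hkernel : ∀ {q : ℕ → S → A → S → ℝ}, (∀ h s a, q h s a ∈ Pconf h s a) →
      ∀ h s a, q h s a ∈ stdSimplex ℝ S := fun hq h s a => hsimplex h s a _ (hq h s a)
  have hw₁ h s : 0 ≤ lam * stateDist π₁ P₁ s0 h s := mul_nonneg hlam₀ <|
    stateDist_nonneg _ _ _ (fun h s => (hπ₁ h s).1) (fun h s a => (hkernel hP₁ h s a).1) h s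
  have hw₂ h s : 0 ≤ (1 - lam) * stateDist π₂ P₂ s0 h s := mul_nonneg (sub_nonneg.2 hlam₁) <|
    stateDist_nonneg _ _ _ (fun h s => (hπ₂ h s).1) (fun h s a => (hkernel hP₂ h s a).1) h s
  choose π hπ hπ_mix using fun h s =>
    (convex_stdSimplex ℝ A).exists_mem_add_smul_eq (hπ₁ h s) (hπ₂ h s) (hw₁ h s) (hw₂ h s)
  choose P hP hP_mix using fun h s a =>
    (hconv h s a).exists_mem_add_smul_eq (hP₁ h s a) (hP₂ h s a)
      (mul_nonneg (hw₁ h s) ((hπ₁ h s).1 a)) (mul_nonneg (hw₂ h s) ((hπ₂ h s).1 a))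
  have hstate := stateDist_eq_of_smul_eq (add_sub_cancel lam 1) hπ_mix hP_mix
  refine ⟨π, P, hπ, hP, fun h s a => ?_⟩
  simp only [occ_eq _ _ _ (fun h s => (hπ h s).2) (fun h s a => (hkernel hP h s a).2),
    occ_eq _ _ _ (fun h s => (hπ₁ h s).2) (fun h s a => (hkernel hP₁ h s a).2),
    occ_eq _ _ _ (fun h s => (hπ₂ h s).2) (fun h s a => (hkernel hP₂ h s a).2)]
  split_ifs
  · have hπa := congrFun (hπ_mix h s) a
    simp only [Pi.add_apply, Pi.smul_apply, smul_eq_mul] at hπa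
    rw [hstate, hπa]
    ring
  · ring
end

section
/- Suppose a confidence region P of transition models is 'tight' with respect to a transition model p, meaning p ∈ P and for every (h,s,a,s') and every p' ∈ P it holds that e^{−1/H} * p_{h,s,a,s'} ≤ p'_{h,s,a,s'} ≤ e^{1/H} * p_{h,s,a,s'}. Then for any p' ∈ P, any policy π, and any (h,s,a): (1/3) * W^π(1_{h,s,a}, p) ≤ W^π(1_{h,s,a}, p') ≤ 3 * W^π(1_{h,s,a}, p), where W^π(1_{h,s,a}, q) is the probability of visiting (s,a) at step h under policy π and transition model q in a finite-horizon MDP with horizon H. -/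
/-!
Each trajectory weight is a product of `H` transition probabilities, and each of them changes by a
factor at most `e^{1/H}` between `p` and `p'`; so the weight of every trajectory changes by a factor
at most `e ≤ 3`. Occupancies are nonnegative combinations of trajectory weights, and the bound
passes to them. Both directions come from the same estimate, since `p ≤ e^{1/H} p'` as well.
-/

open Finset

section Trajectories

variable {S A : Type} [Fintype S] [Fintype A] [DecidableEq S]
  {H : ℕ} {π : ℕ → S → A → ℝ} {p q : ℕ → S → A → S → ℝ} {s0 : S}

lemma trajProb_nonneg (hπ : ∀ h s a, 0 ≤ π h s a) (hp : ∀ h s a s', 0 ≤ p h s a s')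
    (s : Fin (H + 1) → S) (a : Fin H → A) : 0 ≤ trajProb H π p s0 s a := by
  unfold trajProb
  refine mul_nonneg (by split_ifs <;> norm_num) (prod_nonneg fun i _ => ?_)
  exact mul_nonneg (hπ _ _ _) (hp _ _ _ _)

lemma trajProb_le_pow_mul {c : ℝ} (hπ : ∀ h s a, 0 ≤ π h s a) (hq : ∀ h s a s', 0 ≤ q h s a s')
    (hqp : ∀ h s a s', q h s a s' ≤ c * p h s a s') (s : Fin (H + 1) → S) (a : Fin H → A) :
    trajProb H π q s0 s a ≤ c ^ H * trajProb H π p s0 s a := by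
  have hprod : ∏ h : Fin H, π h (s h.castSucc) (a h) * q h (s h.castSucc) (a h) (s h.succ) ≤
      c ^ H * ∏ h : Fin H, π h (s h.castSucc) (a h) * p h (s h.castSucc) (a h) (s h.succ) :=
    calc _ ≤ ∏ h : Fin H, c * (π h (s h.castSucc) (a h) * p h (s h.castSucc) (a h) (s h.succ)) :=
          prod_le_prod (fun i _ => mul_nonneg (hπ _ _ _) (hq _ _ _ _)) fun i _ => by
            rw [mul_left_comm]
            exact mul_le_mul_of_nonneg_left (hqp _ _ _ _) (hπ _ _ _)
      _ = _ := by rw [prod_mul_distrib, prod_const, card_univ, Fintype.card_fin]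
  unfold trajProb
  rw [mul_left_comm]
  exact mul_le_mul_of_nonneg_left hprod (by split_ifs <;> norm_num)

variable (u : ℕ → S → A → ℝ)

lemma W_nonneg (hπ : ∀ h s a, 0 ≤ π h s a) (hp : ∀ h s a s', 0 ≤ p h s a s')
    (hu : ∀ h s a, 0 ≤ u h s a) : 0 ≤ W H π p s0 u :=
  sum_nonneg fun s _ => sum_nonneg fun a _ =>
    mul_nonneg (trajProb_nonneg hπ hp s a) (sum_nonneg fun _ _ => hu _ _ _)

lemma W_le_mul_of_trajProb_le {C : ℝ} (hu : ∀ h s a, 0 ≤ u h s a)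
    (hqp : ∀ s a, trajProb H π q s0 s a ≤ C * trajProb H π p s0 s a) :
    W H π q s0 u ≤ C * W H π p s0 u := by
  unfold W
  rw [mul_sum]
  refine sum_le_sum fun s _ => ?_
  rw [mul_sum]
  refine sum_le_sum fun a _ => ?_
  rw [← mul_assoc]
  exact mul_le_mul_of_nonneg_right (hqp s a) (sum_nonneg fun _ _ => hu _ _ _)

end Trajectories

lemma exp_one_div_pow_le (H : ℕ) : Real.exp (1 / (H : ℝ)) ^ H ≤ Real.exp 1 := by
  rw [← Real.exp_nat_mul, mul_one_div]
  exact Real.exp_le_exp.mpr (div_self_le_one _)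

lemma occ_indicator_nonneg {S A : Type} [DecidableEq S] [DecidableEq A]
    (h0 : ℕ) (s1 : S) (a1 : A) (h : ℕ) (s : S) (a : A) :
    0 ≤ if h = h0 ∧ s = s1 ∧ a = a1 then (1 : ℝ) else 0 := by
  split_ifs <;> norm_num

section Occupancy

variable {S A : Type} [Fintype S] [Fintype A] [DecidableEq S] [DecidableEq A]
  {H : ℕ} {π : ℕ → S → A → ℝ} {p q : ℕ → S → A → S → ℝ}

lemma occ_nonneg (hπ : ∀ h s a, 0 ≤ π h s a) (hp : ∀ h s a s', 0 ≤ p h s a s')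
    (s0 : S) (h0 : ℕ) (s1 : S) (a1 : A) : 0 ≤ occ H π p s0 h0 s1 a1 :=
  W_nonneg _ hπ hp (occ_indicator_nonneg h0 s1 a1)

lemma occ_le_exp_one_mul (hπ : ∀ h s a, 0 ≤ π h s a) (hp : ∀ h s a s', 0 ≤ p h s a s')
    (hq : ∀ h s a s', 0 ≤ q h s a s')
    (hqp : ∀ h s a s', q h s a s' ≤ Real.exp (1 / (H : ℝ)) * p h s a s')
    (s0 : S) (h0 : ℕ) (s1 : S) (a1 : A) :
    occ H π q s0 h0 s1 a1 ≤ Real.exp 1 * occ H π p s0 h0 s1 a1 :=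
  W_le_mul_of_trajProb_le _ (occ_indicator_nonneg h0 s1 a1) fun s a =>
    (trajProb_le_pow_mul hπ hq hqp s a).trans <|
      mul_le_mul_of_nonneg_right (exp_one_div_pow_le H) (trajProb_nonneg hπ hp s a)

end Occupancy

theorem stmt8_general {S A : Type} [Fintype S] [Fintype A] [DecidableEq S] [DecidableEq A]
    (H : ℕ)
    (π : ℕ → S → A → ℝ) (hπ : ∀ h s a, 0 ≤ π h s a)
    (p p' : ℕ → S → A → S → ℝ)
    (hp : ∀ h s a s', 0 ≤ p h s a s')
    (htight : ∀ h s a s',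
      Real.exp (-(1 / (H : ℝ))) * p h s a s' ≤ p' h s a s' ∧
        p' h s a s' ≤ Real.exp (1 / (H : ℝ)) * p h s a s')
    (s0 : S) (h0 : ℕ) (s1 : S) (a1 : A) :
    (1 / 3 : ℝ) * occ H π p s0 h0 s1 a1 ≤ occ H π p' s0 h0 s1 a1 ∧
      occ H π p' s0 h0 s1 a1 ≤ 3 * occ H π p s0 h0 s1 a1 := by
  have hp' : ∀ h s a s', 0 ≤ p' h s a s' := fun h s a s' =>
    (mul_nonneg (Real.exp_pos _).le (hp h s a s')).trans (htight h s a s').1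
  have hpp' : ∀ h s a s', p h s a s' ≤ Real.exp (1 / (H : ℝ)) * p' h s a s' := fun h s a s' =>
    calc p h s a s' = Real.exp (1 / (H : ℝ)) * (Real.exp (-(1 / (H : ℝ))) * p h s a s') := by
          rw [← mul_assoc, ← Real.exp_add, add_neg_cancel, Real.exp_zero, one_mul]
      _ ≤ Real.exp (1 / (H : ℝ)) * p' h s a s' :=
          mul_le_mul_of_nonneg_left (htight h s a s').1 (Real.exp_pos _).le
  have he : Real.exp 1 ≤ 3 := Real.exp_one_lt_three.le
  have hlower := occ_le_exp_one_mul hπ hp' hp hpp' s0 h0 s1 a1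
  have hupper := occ_le_exp_one_mul hπ hp hp' (fun h s a s' => (htight h s a s').2) s0 h0 s1 a1
  have hocc := occ_nonneg (H := H) hπ hp s0 h0 s1 a1
  have hocc' := occ_nonneg (H := H) hπ hp' s0 h0 s1 a1
  constructor <;> nlinarith

/-- **Tight confidence regions distort occupancies by at most a factor 3.**
If `p'` satisfies `e^{-1/H}·p ≤ p' ≤ e^{1/H}·p` coordinatewise, then for every policy
`π` and every `(h,s,a)`, `(1/3)·W^π(1_{h,s,a},p) ≤ W^π(1_{h,s,a},p') ≤ 3·W^π(1_{h,s,a},p)`. -/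
theorem stmt8 {S A : Type} [Fintype S] [Fintype A] [DecidableEq S] [DecidableEq A]
    (H : ℕ) (hH : 1 ≤ H)
    (π : ℕ → S → A → ℝ) (hπ : ∀ h s a, 0 ≤ π h s a)
    (p p' : ℕ → S → A → S → ℝ)
    (hp : ∀ h s a s', 0 ≤ p h s a s')
    (htight : ∀ h s a s',
      Real.exp (-(1 / (H : ℝ))) * p h s a s' ≤ p' h s a s' ∧
        p' h s a s' ≤ Real.exp (1 / (H : ℝ)) * p h s a s')
    (s0 : S) (h0 : ℕ) (s1 : S) (a1 : A) :
    (1 / 3 : ℝ) * occ H π p s0 h0 s1 a1 ≤ occ H π p' s0 h0 s1 a1 ∧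
      occ H π p' s0 h0 s1 a1 ≤ 3 * occ H π p s0 h0 s1 a1 :=
  stmt8_general H π hπ p p' hp htight s0 h0 s1 a1
end

section
/- Consider an MDP with two states {s0, s1}, A actions, starting at s0, and d = floor(2*log_A(K)) + 2 layers, where at each layer h ≤ d exactly one action a_{v_h} keeps the agent at s0 and all other actions send it to the absorbing state s1. For any distribution D over (possibly stochastic) policies, there exists a choice v ∈ {1,...,A}^d of the 'correct' actions such that E_{π~D} P_π[s_d = s0 | P^v] ≤ 1/A^{d-1} ≤ 1/K. Consequently, with probability at least 1 − 1/K, running K independent episodes with policies drawn from D never visits s0 at layer d. -/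
/-!
Greedy choice of the combination: whatever the hidden actions of the first `n` layers, the
policies, averaged over the actions of layer `n`, keep the current survival mass unchanged,
so some action of layer `n` keeps at most a `1 / A` fraction of it. After `d - 1` layers at
most `1 / A ^ (d - 1)` survives, and `d - 1 = ⌊2 log_A K⌋ + 1 > log_A K`.
-/

open Finset

theorem exists_sum_mul_le_sum_div_card {ι α : Type*} [Fintype ι] [Fintype α] [Nonempty α]
    (u : ι → ℝ) (p : ι → α → ℝ) (hp : ∀ i, ∑ a, p i a = 1) :
    ∃ a, ∑ i, u i * p i a ≤ (∑ i, u i) / Fintype.card α := by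
  have htotal : ∑ a, ∑ i, u i * p i a = ∑ _a : α, (∑ i, u i) / Fintype.card α := by
    rw [sum_comm, sum_const, card_univ, nsmul_eq_mul, mul_div_cancel₀ _ (by positivity)]
    simp_rw [← mul_sum, hp, mul_one]
  obtain ⟨a, -, ha⟩ := exists_le_of_sum_le univ_nonempty htotal.le
  exact ⟨a, ha⟩

theorem exists_sum_mul_prod_range_le {ι α : Type*} [Fintype ι] [Fintype α] [Nonempty α]
    (w : ι → ℝ) (π : ι → ℕ → α → ℝ) (hπ : ∀ i h, ∑ a, π i h a = 1) (n : ℕ) :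
    ∃ v : ℕ → α, ∑ i, w i * ∏ h ∈ range n, π i h (v h) ≤
      (∑ i, w i) / (Fintype.card α : ℝ) ^ n := by
  induction n with
  | zero => exact ⟨fun _ => Classical.arbitrary α, by simp⟩
  | succ n ih =>
    obtain ⟨v, hv⟩ := ih
    obtain ⟨a, ha⟩ := exists_sum_mul_le_sum_div_card
      (fun i => w i * ∏ h ∈ range n, π i h (v h)) (fun i => π i n) (fun i => hπ i n)
    refine ⟨Function.update v n a, ?_⟩
    have hprod : ∀ i, ∏ h ∈ range (n + 1), π i h (Function.update v n a h) =
        (∏ h ∈ range n, π i h (v h)) * π i n a := by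
      intro i
      rw [prod_range_succ, Function.update_self]
      congr 1
      exact prod_congr rfl fun h hh => by
        rw [Function.update_of_ne (mem_range.1 hh).ne]
    calc ∑ i, w i * ∏ h ∈ range (n + 1), π i h (Function.update v n a h)
        = ∑ i, w i * (∏ h ∈ range n, π i h (v h)) * π i n a := by
          simp_rw [hprod, mul_assoc]
      _ ≤ (∑ i, w i * ∏ h ∈ range n, π i h (v h)) / Fintype.card α := ha
      _ ≤ (∑ i, w i) / (Fintype.card α : ℝ) ^ n / Fintype.card α := by
          gcongr
      _ = (∑ i, w i) / (Fintype.card α : ℝ) ^ (n + 1) := by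
          rw [div_div, pow_succ]

theorem le_pow_natFloor_two_mul_logb_add_one {b k : ℕ} (hb : 1 < b) (hk : 1 ≤ k) :
    k ≤ b ^ (⌊2 * Real.logb b k⌋₊ + 1) := by
  have hlog : Nat.log b k ≤ ⌊2 * Real.logb b k⌋₊ := by
    rw [← Real.natFloor_logb_natCast]
    have : 0 ≤ Real.logb b k := Real.logb_nonneg (by exact_mod_cast hb) (by exact_mod_cast hk)
    exact Nat.floor_le_floor (by linarith)
  exact (Nat.lt_pow_succ_log_self hb k).le.trans (Nat.pow_le_pow_right (by omega) (by omega))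

theorem stmt10_general (A d K : ℕ) (hA : 2 ≤ A) (hK : 1 ≤ K)
    (hd : d = Nat.floor (2 * Real.logb A K) + 2)
    {ι : Type*} [Fintype ι] (w : ι → ℝ) (hw1 : ∑ i, w i = 1)
    (π : ι → ℕ → Fin A → ℝ)
    (hπ : ∀ i h, (∀ a, 0 ≤ π i h a) ∧ ∑ a, π i h a = 1) :
    ∃ v : ℕ → Fin A,
      (∑ i, w i * ∏ h ∈ Finset.range (d - 1), π i h (v h)) ≤ 1 / (A : ℝ) ^ (d - 1) ∧
        1 / (A : ℝ) ^ (d - 1) ≤ 1 / (K : ℝ) := by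
  have : Nonempty (Fin A) := ⟨⟨0, by omega⟩⟩
  obtain ⟨v, hv⟩ := exists_sum_mul_prod_range_le w π (fun i h => (hπ i h).2) (d - 1)
  rw [hw1, Fintype.card_fin] at hv
  refine ⟨v, hv, one_div_le_one_div_of_le (by positivity) ?_⟩
  have hKA : K ≤ A ^ (d - 1) := by
    rw [hd, Nat.add_sub_assoc one_le_two]
    exact le_pow_natFloor_two_mul_logb_add_one hA hK
  exact_mod_cast hKA

/-- **Single-block combination-lock lemma.** In the two-state MDP with `A` actions and
`d = ⌊2 log_A K⌋ + 2` layers, where at each layer exactly one hidden action keeps the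
agent at `s0` and all others send it to the absorbing state `s1`, for any (finitely
supported) distribution over stochastic policies — described by weights `w i` over
policies `π i`, where `π i h a` is the probability that policy `i` plays action `a`
at state `s0` at layer `h` — there is a choice `v` of hidden actions such that the
expected probability of still being at `s0` at layer `d`, namely
`∑ᵢ wᵢ ∏_{h<d-1} πᵢ h (v h)`, is at most `1/A^{d-1} ≤ 1/K`. -/
theorem stmt10 (A d K : ℕ) (hA : 2 ≤ A) (hK : 1 ≤ K)
    (hd : d = Nat.floor (2 * Real.logb A K) + 2)
    {ι : Type*} [Fintype ι] (w : ι → ℝ) (hw : ∀ i, 0 ≤ w i) (hw1 : ∑ i, w i = 1)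
    (π : ι → ℕ → Fin A → ℝ)
    (hπ : ∀ i h, (∀ a, 0 ≤ π i h a) ∧ ∑ a, π i h a = 1) :
    ∃ v : ℕ → Fin A,
      (∑ i, w i * ∏ h ∈ Finset.range (d - 1), π i h (v h)) ≤ 1 / (A : ℝ) ^ (d - 1) ∧
        1 / (A : ℝ) ^ (d - 1) ≤ 1 / (K : ℝ) :=
  stmt10_general A d K hA hK hd w hw1 π hπ
end
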